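/- arXiv:2007.01185 — 4 statements merged into one kernel-verified Lean document; each statement's English description precedes it below -/
import Mathlib

section
/- Let β, γ, δ, c, M > 0 and define m(t,ρ) = (M^{1/β} - c (c₀-ρ)^γ / (T-t)^δ)^β. If β = (α-1)/α, γ = α/(α-1), δ = 1/(α-1), then m_t + m m_ρ^α = (M^{1/β} - c (c₀-ρ)^γ (T-t)^{-δ})^{β-1} · (c₀-ρ)^γ (T-t)^{-(δ+1)} · (-cδβ + (cγβ)^α) on the region where the base is positive, 0 ≤ t < T and ρ < c₀. In particular m solves m_t + m m_ρ^α = 0 if and only if -c/α + c^α = 0, i.e., c = α^{1/(1-α)}... (equivalently c^{α-1} = 1/α). -/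
/-!
Write `m = B ^ β`. By the chain rule both `m_t` and `m_ρ` are `β B^(β-1)` times a monomial in
`c₀ - ρ` and `T - t`. The exponents satisfy `(γ - 1) α = γ`, `-δ α = -(δ + 1)` and
`β + (β - 1) α = β - 1`, which makes `m_t` and `m m_ρ^α` the same monomial
`B^(β-1) (c₀-ρ)^γ (T-t)^(-(δ+1))`, with coefficients `-cδβ` and `(cγβ)^α`.
-/

open Real Set

lemma hasDerivAt_rpow_const_sub_mul_rpow_sub {K A u q β x : ℝ} (hx : x < u)
    (hB : 0 < K - A * (u - x) ^ q) :
    HasDerivAt (fun s => (K - A * (u - s) ^ q) ^ β)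
      (A * q * (u - x) ^ (q - 1) * β * (K - A * (u - x) ^ q) ^ (β - 1)) x := by
  have hsub : HasDerivAt (fun s : ℝ => (u - s) ^ q) (-1 * q * (u - x) ^ (q - 1)) x :=
    ((hasDerivAt_id x).const_sub u).rpow_const (Or.inl (sub_pos.mpr hx).ne')
  convert ((hsub.const_mul A).const_sub K).rpow_const (p := β) (Or.inl hB.ne') using 1
  ring

lemma ansatz_exponents {α β γ δ : ℝ} (hα : 1 < α) (hβ : β = (α - 1) / α)
    (hγ : γ = α / (α - 1)) (hδ : δ = 1 / (α - 1)) :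
    (γ - 1) * α = γ ∧ -δ * α = -(δ + 1) ∧ β + (β - 1) * α = β - 1 := by
  have hα0 : α ≠ 0 := by positivity
  have hα1 : α - 1 ≠ 0 := sub_ne_zero.mpr hα.ne'
  subst hβ hγ hδ
  refine ⟨?_, ?_, ?_⟩ <;> field_simp <;> ring

lemma rpow_monomial_mul_rpow {P Q B k α β γ δ : ℝ} (hP : 0 ≤ P) (hQ : 0 ≤ Q) (hB : 0 < B)
    (hk : 0 ≤ k) (hγ : (γ - 1) * α = γ) (hδ : -δ * α = -(δ + 1))
    (hβ : β + (β - 1) * α = β - 1) :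
    B ^ β * (k * P ^ (γ - 1) * Q ^ (-δ) * B ^ (β - 1)) ^ α
      = k ^ α * P ^ γ * Q ^ (-(δ + 1)) * B ^ (β - 1) := by
  rw [mul_rpow (by positivity) (by positivity), mul_rpow (by positivity) (by positivity),
    mul_rpow hk (by positivity), ← rpow_mul hP, ← rpow_mul hQ, ← rpow_mul hB.le, hγ, hδ]
  calc B ^ β * (k ^ α * P ^ γ * Q ^ (-(δ + 1)) * B ^ ((β - 1) * α))
      = k ^ α * P ^ γ * Q ^ (-(δ + 1)) * (B ^ β * B ^ ((β - 1) * α)) := by ring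
    _ = k ^ α * P ^ γ * Q ^ (-(δ + 1)) * B ^ (β - 1) := by rw [← rpow_add hB, hβ]

lemma neg_div_add_rpow_eq_zero_iff {c α : ℝ} (hc : 0 < c) (hα : α ≠ 0) :
    -(c / α) + c ^ α = 0 ↔ c ^ (α - 1) = 1 / α := by
  rw [rpow_sub_one hc.ne']
  constructor <;> intro h <;> field_simp at h ⊢ <;> linarith

theorem separated_variables_ansatz_identity_general (α M c₀ T c : ℝ) (hα : 1 < α)
    (hc : 0 < c)
    (β γ δ : ℝ) (hβ : β = (α - 1) / α) (hγ : γ = α / (α - 1)) (hδ : δ = 1 / (α - 1))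
    (m : ℝ → ℝ → ℝ)
    (hm : ∀ t ρ : ℝ, m t ρ = (M ^ (1 / β) - c * (c₀ - ρ) ^ γ * (T - t) ^ (-δ)) ^ β) :
    (∀ t ρ : ℝ, 0 ≤ t → t < T → ρ < c₀ →
      0 < M ^ (1 / β) - c * (c₀ - ρ) ^ γ * (T - t) ^ (-δ) →
      ∃ mt mρ : ℝ,
        HasDerivAt (fun s => m s ρ) mt t ∧
        HasDerivAt (fun r => m t r) mρ ρ ∧
        mt + m t ρ * mρ ^ α =
          (M ^ (1 / β) - c * (c₀ - ρ) ^ γ * (T - t) ^ (-δ)) ^ (β - 1) *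
            ((c₀ - ρ) ^ γ * (T - t) ^ (-(δ + 1))) *
            (-(c * δ * β) + (c * γ * β) ^ α)) ∧
    ((-(c / α) + c ^ α = 0) ↔ c ^ (α - 1) = 1 / α) := by
  obtain ⟨hγα, hδα, hβα⟩ := ansatz_exponents hα hβ hγ hδ
  refine ⟨fun t ρ _ htT hρ hB => ?_, neg_div_add_rpow_eq_zero_iff hc (by positivity)⟩
  set B := M ^ (1 / β) - c * (c₀ - ρ) ^ γ * (T - t) ^ (-δ) with hBdef
  have hmt : HasDerivAt (fun s => m s ρ)
      (c * (c₀ - ρ) ^ γ * -δ * (T - t) ^ (-δ - 1) * β * B ^ (β - 1)) t := by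
    simpa only [hm] using hasDerivAt_rpow_const_sub_mul_rpow_sub (K := M ^ (1 / β))
      (A := c * (c₀ - ρ) ^ γ) (q := -δ) (β := β) htT hB
  have hmρ : HasDerivAt (fun r => m t r)
      (c * γ * β * (c₀ - ρ) ^ (γ - 1) * (T - t) ^ (-δ) * B ^ (β - 1)) ρ := by
    convert hasDerivAt_rpow_const_sub_mul_rpow_sub (K := M ^ (1 / β)) (A := c * (T - t) ^ (-δ))
      (q := γ) (β := β) hρ (hB.trans_eq (by ring)) using 1
    · funext r; rw [hm, mul_right_comm c]
    · rw [mul_right_comm c ((T - t) ^ (-δ)) ((c₀ - ρ) ^ γ), ← hBdef]; ring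
  refine ⟨_, _, hmt, hmρ, ?_⟩
  have hβ0 : 0 < β := by rw [hβ]; exact div_pos (sub_pos.mpr hα) (by positivity)
  have hγ0 : 0 < γ := by rw [hγ]; exact div_pos (by positivity) (sub_pos.mpr hα)
  have hpow := rpow_monomial_mul_rpow (sub_pos.mpr hρ).le (sub_pos.mpr htT).le hB
    (by positivity : 0 ≤ c * γ * β) hγα hδα hβα
  rw [hm, ← hBdef, show -δ - 1 = -(δ + 1) by ring]
  linear_combination hpow

theorem separated_variables_ansatz_identity (α M c₀ T c : ℝ) (hα : 1 < α)
    (hM : 0 < M) (hc₀ : 0 < c₀) (hT : 0 < T) (hc : 0 < c)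
    (β γ δ : ℝ) (hβ : β = (α - 1) / α) (hγ : γ = α / (α - 1)) (hδ : δ = 1 / (α - 1))
    (m : ℝ → ℝ → ℝ)
    (hm : ∀ t ρ : ℝ, m t ρ = (M ^ (1 / β) - c * (c₀ - ρ) ^ γ * (T - t) ^ (-δ)) ^ β) :
    (∀ t ρ : ℝ, 0 ≤ t → t < T → ρ < c₀ →
      0 < M ^ (1 / β) - c * (c₀ - ρ) ^ γ * (T - t) ^ (-δ) →
      ∃ mt mρ : ℝ,
        HasDerivAt (fun s => m s ρ) mt t ∧
        HasDerivAt (fun r => m t r) mρ ρ ∧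
        mt + m t ρ * mρ ^ α =
          (M ^ (1 / β) - c * (c₀ - ρ) ^ γ * (T - t) ^ (-δ)) ^ (β - 1) *
            ((c₀ - ρ) ^ γ * (T - t) ^ (-(δ + 1))) *
            (-(c * δ * β) + (c * γ * β) ^ α)) ∧
    ((-(c / α) + c ^ α = 0) ↔ c ^ (α - 1) = 1 / α) :=
  separated_variables_ansatz_identity_general α M c₀ T c hα hc β γ δ hβ hγ hδ m hm
end

section
/- Let u₀ be non-negative, bounded by K, with m₀ bounded by M, and suppose L := sup_{ρ≥0} |u₀(ρ)^α + m₀(ρ) d(u₀^{α-1})/dρ (ρ)| < ∞. Then for all 0 ≤ t < 1/(αL), the map P_t(ρ₀) = ρ₀ + α m₀(ρ₀) u₀(ρ₀)^{α-1} t satisfies dP_t/dρ₀ ≥ 1 - αtL > 0, and hence P_t is injective on [0,∞). -/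
open Real Set intervalIntegral

/-! Along the characteristics, `P_t' = 1 + α t (u₀ ^ α + m₀ (u₀ ^ (α - 1))')`, because `m₀' = u₀`
and `u₀ · u₀ ^ (α - 1) = u₀ ^ α`. The bracket is at least `-L`, so `P_t' ≥ 1 - α t L > 0` for
`t < 1 / (α L)`, and a function with positive derivative on `[0, ∞)` is strictly increasing there. -/

lemma Real.continuous_of_continuous_rpow {X : Type*} [TopologicalSpace X] {f : X → ℝ} {p : ℝ}
    (hp : 0 < p) (hf : ∀ x, 0 ≤ f x) (h : Continuous fun x => f x ^ p) : Continuous f := by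
  have hinv : f = fun x => (f x ^ p) ^ p⁻¹ := funext fun x => (rpow_rpow_inv (hf x) hp.ne').symm
  rw [hinv]
  exact h.rpow_const fun _ => Or.inr (inv_nonneg.mpr hp.le)

lemma Real.mul_rpow_sub_one {x : ℝ} (hx : 0 ≤ x) {a : ℝ} (ha : a ≠ 0) :
    x * x ^ (a - 1) = x ^ a := by
  conv_rhs => rw [← add_sub_cancel 1 a, rpow_add' hx (by simpa using ha), rpow_one]

lemma StrictMonoOn.of_hasDerivAt_pos {D : Set ℝ} (hD : Convex ℝ D) {f f' : ℝ → ℝ}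
    (hf : ∀ x ∈ D, HasDerivAt f (f' x) x) (hf' : ∀ x ∈ D, 0 < f' x) : StrictMonoOn f D :=
  strictMonoOn_of_hasDerivWithinAt_pos hD
    (fun x hx => (hf x hx).continuousAt.continuousWithinAt)
    (fun x hx => (hf x (interior_subset hx)).hasDerivWithinAt)
    (fun x hx => hf' x (interior_subset hx))

lemma hasDerivAt_characteristic {α t ρ g' : ℝ} (hα : α ≠ 0) {u m : ℝ → ℝ} (hu : 0 ≤ u ρ)
    (hm : HasDerivAt m (u ρ) ρ) (hg : HasDerivAt (fun x => u x ^ (α - 1)) g' ρ) :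
    HasDerivAt (fun x => x + α * m x * u x ^ (α - 1) * t)
      (1 + α * t * (u ρ ^ α + m ρ * g')) ρ := by
  refine ((hasDerivAt_id' ρ).add (((hm.const_mul α).mul hg).mul_const t)).congr_deriv ?_
  rw [← mul_rpow_sub_one hu hα]
  ring

theorem characteristics_short_time_general (α L : ℝ) (hα : 1 < α) (hL : 0 < L)
    (u₀ : ℝ → ℝ) (hnn : ∀ ρ, 0 ≤ u₀ ρ)
    (m₀ : ℝ → ℝ) (hm₀ : ∀ ρ, m₀ ρ = ∫ σ in (0:ℝ)..ρ, u₀ σ)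
    (hdiff : Differentiable ℝ (fun ρ => u₀ ρ ^ (α - 1)))
    (hLbd : ∀ ρ, 0 ≤ ρ →
      |u₀ ρ ^ α + m₀ ρ * deriv (fun x => u₀ x ^ (α - 1)) ρ| ≤ L)
    (P : ℝ → ℝ → ℝ)
    (hP : ∀ t ρ₀, P t ρ₀ = ρ₀ + α * m₀ ρ₀ * u₀ ρ₀ ^ (α - 1) * t) :
    ∀ t : ℝ, 0 ≤ t → t < 1 / (α * L) →
      0 < 1 - α * t * L ∧
      (∀ ρ₀ : ℝ, 0 ≤ ρ₀ → ∃ d : ℝ, HasDerivAt (P t) d ρ₀ ∧ 1 - α * t * L ≤ d) ∧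
      InjOn (P t) (Ici 0) := by
  intro t ht htL
  have hαL : 0 < α * L := by positivity
  have hgap : 0 < 1 - α * t * L := by
    rw [lt_div_iff₀ hαL] at htL
    linarith
  have hu : Continuous u₀ :=
    continuous_of_continuous_rpow (by linarith) hnn hdiff.continuous
  have hm : ∀ ρ, HasDerivAt m₀ (u₀ ρ) ρ := by
    rw [show m₀ = fun ρ => ∫ σ in (0:ℝ)..ρ, u₀ σ from funext hm₀]
    exact fun ρ => (hu.integral_hasStrictDerivAt 0 ρ).hasDerivAt
  have hP' : ∀ ρ, HasDerivAt (P t)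
      (1 + α * t * (u₀ ρ ^ α + m₀ ρ * deriv (fun x => u₀ x ^ (α - 1)) ρ)) ρ := by
    rw [show P t = _ from funext (hP t)]
    exact fun ρ => hasDerivAt_characteristic (by linarith) (hnn ρ) (hm ρ) (hdiff ρ).hasDerivAt
  have hbound : ∀ ρ, 0 ≤ ρ →
      1 - α * t * L ≤ 1 + α * t * (u₀ ρ ^ α + m₀ ρ * deriv (fun x => u₀ x ^ (α - 1)) ρ) := by
    intro ρ hρ
    have := mul_le_mul_of_nonneg_left (neg_le_of_abs_le (hLbd ρ hρ)) (by positivity : 0 ≤ α * t)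
    linarith
  refine ⟨hgap, fun ρ hρ => ⟨_, hP' ρ, hbound ρ hρ⟩, ?_⟩
  exact (StrictMonoOn.of_hasDerivAt_pos (convex_Ici 0) (fun ρ _ => hP' ρ)
    fun ρ hρ => hgap.trans_le (hbound ρ hρ)).injOn

theorem characteristics_short_time (α K M L : ℝ) (hα : 1 < α) (hL : 0 < L)
    (u₀ : ℝ → ℝ) (hnn : ∀ ρ, 0 ≤ u₀ ρ) (hK : ∀ ρ, u₀ ρ ≤ K)
    (m₀ : ℝ → ℝ) (hm₀ : ∀ ρ, m₀ ρ = ∫ σ in (0:ℝ)..ρ, u₀ σ)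
    (hMbd : ∀ ρ, 0 ≤ ρ → m₀ ρ ≤ M)
    (hdiff : Differentiable ℝ (fun ρ => u₀ ρ ^ (α - 1)))
    (hLbd : ∀ ρ, 0 ≤ ρ →
      |u₀ ρ ^ α + m₀ ρ * deriv (fun x => u₀ x ^ (α - 1)) ρ| ≤ L)
    (P : ℝ → ℝ → ℝ)
    (hP : ∀ t ρ₀, P t ρ₀ = ρ₀ + α * m₀ ρ₀ * u₀ ρ₀ ^ (α - 1) * t) :
    ∀ t : ℝ, 0 ≤ t → t < 1 / (α * L) →
      0 < 1 - α * t * L ∧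
      (∀ ρ₀ : ℝ, 0 ≤ ρ₀ → ∃ d : ℝ, HasDerivAt (P t) d ρ₀ ∧ 1 - α * t * L ≤ d) ∧
      InjOn (P t) (Ici 0) :=
  characteristics_short_time_general α L hα hL u₀ hnn m₀ hm₀ hdiff hLbd P hP
end

section
/- For α > 1, c₀ > 0, L > 0, the function m(t,ρ) = min{(c₀^{-α} + αt)^{-1/α} ρ, c₀ L} is a viscosity solution of m_t + (m_ρ)₊^α m = 0 on (0,∞)×(0,∞): at every point where the minimum is not attained by both branches simultaneously m is a classical solution, and at points (t₀,ρ₀) with (c₀^{-α}+αt₀)^{-1/α} ρ₀ = c₀L, the subdifferential D⁻m(t₀,ρ₀) is empty and every (p₁,p₂) ∈ D⁺m(t₀,ρ₀) satisfies p₁ + (p₂)₊^α m(t₀,ρ₀) ≤ 0. -/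
open Real Set Filter

/-- Fréchet superdifferential of a function of two real variables. -/
def superdiff (f : ℝ × ℝ → ℝ) (x : ℝ × ℝ) : Set (ℝ × ℝ) :=
  {p | ∀ ε > (0:ℝ), ∀ᶠ y in nhds x,
    f y - f x - (p.1 * (y.1 - x.1) + p.2 * (y.2 - x.2)) ≤ ε * ‖y - x‖}

/-- Fréchet subdifferential of a function of two real variables. -/
def subdiff (f : ℝ × ℝ → ℝ) (x : ℝ × ℝ) : Set (ℝ × ℝ) :=
  {p | ∀ ε > (0:ℝ), ∀ᶠ y in nhds x,
    f y - f x - (p.1 * (y.1 - x.1) + p.2 * (y.2 - x.2)) ≥ -ε * ‖y - x‖}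

/-!
Write `g(t) = (c₀^{-α} + αt)^{-1/α}`, so that `g' = -g^{α+1}` and `φ(t,ρ) = g(t) ρ` solves
`φ_t + φ_ρ^α φ = 0` classically, as does the constant `c₀L`; away from the kink `m` coincides with
one of the two near the point. At the kink `m = min(φ, c₀L)` has a concave corner: a subgradient `p`
would be a subgradient both of the constant (forcing `p = 0`) and of `φ` (forcing `p = ∇φ ≠ 0`),
while comparing one-sided directional derivatives shows that every supergradient is `μ ∇φ` with
`μ ∈ [0,1]`. For such `p` the equation's left side is `g^{α+1} ρ (μ^α - μ) ≤ 0` since `α ≥ 1`.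
-/

open Topology

def dot (p v : ℝ × ℝ) : ℝ := p.1 * v.1 + p.2 * v.2

lemma eq_of_forall_dot_le {p q : ℝ × ℝ} (h : ∀ v, dot p v ≤ dot q v) : p = q := by
  have h₁ := h (1, 0); have h₂ := h (-1, 0); have h₃ := h (0, 1); have h₄ := h (0, -1)
  simp only [dot] at h₁ h₂ h₃ h₄
  ext <;> linarith

lemma exists_mem_Icc_smul_eq_of_forall_min_dot_le {p q : ℝ × ℝ} (hq : q ≠ 0)
    (h : ∀ v, min (dot q v) 0 ≤ dot p v) : ∃ μ ∈ Icc (0 : ℝ) 1, p = μ • q := by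
  have hq₂ : 0 < q.1 ^ 2 + q.2 ^ 2 := by
    have : q.1 ≠ 0 ∨ q.2 ≠ 0 := by
      by_contra! h₀
      exact hq (Prod.ext h₀.1 h₀.2)
    rcases this with h | h <;> positivity
  -- testing with `±q⊥` makes `p` parallel to `q`, testing with `±q` gives `0 ≤ p⬝q ≤ |q|²`
  have hpar : p.1 * q.2 = p.2 * q.1 := by
    have h₁ := h (q.2, -q.1); have h₂ := h (-q.2, q.1)
    simp only [dot, show q.1 * q.2 + q.2 * -q.1 = 0 by ring,
      show q.1 * -q.2 + q.2 * q.1 = 0 by ring, min_self] at h₁ h₂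
    linarith
  have hlo := h q
  have hhi := h (-q)
  simp only [dot, Prod.fst_neg, Prod.snd_neg] at hlo hhi
  rw [min_eq_right (by nlinarith)] at hlo
  rw [min_eq_left (by nlinarith)] at hhi
  refine ⟨dot p q / (q.1 ^ 2 + q.2 ^ 2), ⟨div_nonneg hlo hq₂.le, ?_⟩, ?_⟩
  · rw [div_le_one hq₂]; unfold dot; linarith
  · ext <;> simp only [Prod.smul_fst, Prod.smul_snd, smul_eq_mul, dot] <;> field_simp
    · linear_combination q.2 * hpar
    · linear_combination (-q.1) * hpar

lemma tendsto_add_smul_nhdsGT (x v : ℝ × ℝ) :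
    Tendsto (fun s : ℝ => x + s • v) (𝓝[>] 0) (𝓝 x) :=
  ((continuous_const.add (continuous_id.smul continuous_const)).tendsto' 0 x
    (by simp)).mono_left nhdsWithin_le_nhds

lemma eventually_add_smul_le_of_forall_eventually_le {e : ℝ × ℝ → ℝ} {x : ℝ × ℝ}
    (h : ∀ ε > (0 : ℝ), ∀ᶠ y in 𝓝 x, e y ≤ ε * ‖y - x‖) (v : ℝ × ℝ) {ε : ℝ} (hε : 0 < ε) :
    ∀ᶠ s in 𝓝[>] (0 : ℝ), e (x + s • v) ≤ s * ε := by
  have hε' : 0 < ε / (‖v‖ + 1) := by positivity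
  filter_upwards [(tendsto_add_smul_nhdsGT x v).eventually (h _ hε'), self_mem_nhdsWithin]
    with s hs (hs₀ : 0 < s)
  rw [add_sub_cancel_left, norm_smul, Real.norm_eq_abs, abs_of_pos hs₀] at hs
  calc _ ≤ ε / (‖v‖ + 1) * (s * ‖v‖) := hs
    _ ≤ s * ε := by
      rw [div_mul_eq_mul_div, div_le_iff₀ (by positivity)]
      nlinarith [norm_nonneg v]

lemma dot_add_smul_sub (p x v : ℝ × ℝ) (s : ℝ) : dot p (x + s • v - x) = s * dot p v := by
  simp only [add_sub_cancel_left, dot, Prod.smul_fst, Prod.smul_snd, smul_eq_mul]; ring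

lemma eventually_add_smul_le_of_mem_superdiff {f : ℝ × ℝ → ℝ} {x p : ℝ × ℝ}
    (hp : p ∈ superdiff f x) (v : ℝ × ℝ) {ε : ℝ} (hε : 0 < ε) :
    ∀ᶠ s in 𝓝[>] (0 : ℝ), f (x + s • v) - f x ≤ s * (dot p v + ε) := by
  filter_upwards [eventually_add_smul_le_of_forall_eventually_le
    (e := fun y => f y - f x - dot p (y - x)) hp v hε] with s hs
  rw [dot_add_smul_sub] at hs
  linarith

def DiniLowerBound (f : ℝ × ℝ → ℝ) (x v : ℝ × ℝ) (d : ℝ) : Prop :=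
  ∀ ε > (0 : ℝ), ∀ᶠ s in 𝓝[>] (0 : ℝ), s * (d - ε) ≤ f (x + s • v) - f x

lemma diniLowerBound_of_mem_subdiff {f : ℝ × ℝ → ℝ} {x p : ℝ × ℝ}
    (hp : p ∈ subdiff f x) (v : ℝ × ℝ) : DiniLowerBound f x v (dot p v) := by
  intro ε hε
  filter_upwards [eventually_add_smul_le_of_forall_eventually_le
    (e := fun y => -(f y - f x - dot p (y - x)))
    (fun ε hε => (hp ε hε).mono fun y hy => by
      simp only [dot, Prod.fst_sub, Prod.snd_sub]; linarith) v hε] with s hs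
  rw [dot_add_smul_sub] at hs
  linarith

lemma DiniLowerBound.le_dot_of_mem_superdiff {f : ℝ × ℝ → ℝ} {x v p : ℝ × ℝ} {d : ℝ}
    (hd : DiniLowerBound f x v d) (hp : p ∈ superdiff f x) : d ≤ dot p v := by
  refine le_of_forall_pos_le_add fun ε hε => ?_
  obtain ⟨s, ⟨hlo, hhi⟩, hs₀ : 0 < s⟩ :=
    ((hd (ε / 2) (half_pos hε)).and (eventually_add_smul_le_of_mem_superdiff hp v
      (half_pos hε)) |>.and self_mem_nhdsWithin).exists
  have : s * (d - ε / 2) ≤ s * (dot p v + ε / 2) := hlo.trans hhi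
  linarith [le_of_mul_le_mul_left this hs₀]

lemma DiniLowerBound.min_const {f : ℝ × ℝ → ℝ} {x v : ℝ × ℝ} {d c : ℝ}
    (hd : DiniLowerBound f x v d) (hfx : f x = c) :
    DiniLowerBound (fun y => min (f y) c) x v (min d 0) := by
  intro ε hε
  filter_upwards [hd ε hε, self_mem_nhdsWithin] with s hs (hs₀ : 0 < s)
  have hmin : s * min d 0 ≤ s * d ∧ s * min d 0 ≤ 0 :=
    ⟨mul_le_mul_of_nonneg_left (min_le_left d 0) hs₀.le,
      mul_nonpos_of_nonneg_of_nonpos hs₀.le (min_le_right d 0)⟩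
  simp only [hfx, min_self]
  rw [hfx] at hs
  rcases le_total (f (x + s • v)) c with h | h
  · rw [min_eq_left h]; nlinarith
  · rw [min_eq_right h]; nlinarith

lemma eq_of_mem_subdiff_of_mem_superdiff {f : ℝ × ℝ → ℝ} {x p q : ℝ × ℝ}
    (hp : p ∈ subdiff f x) (hq : q ∈ superdiff f x) : p = q :=
  eq_of_forall_dot_le fun v => (diniLowerBound_of_mem_subdiff hp v).le_dot_of_mem_superdiff hq

lemma mem_subdiff_of_le_of_eq {f g : ℝ × ℝ → ℝ} {x p : ℝ × ℝ} (hfg : ∀ y, f y ≤ g y)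
    (hx : f x = g x) (hp : p ∈ subdiff f x) : p ∈ subdiff g x := fun ε hε =>
  (hp ε hε).mono fun y hy => by linarith [hfg y]

lemma zero_mem_superdiff_const (c : ℝ) (x : ℝ × ℝ) : (0 : ℝ × ℝ) ∈ superdiff (fun _ => c) x :=
  fun ε hε => Eventually.of_forall fun y => by simp; positivity

lemma subdiff_min_const_eq_empty {f : ℝ × ℝ → ℝ} {x q : ℝ × ℝ} {c : ℝ}
    (hq : q ∈ superdiff f x) (hq₀ : q ≠ 0) (hfx : f x = c) :
    subdiff (fun y => min (f y) c) x = ∅ := by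
  refine eq_empty_of_forall_notMem fun p hp => hq₀ ?_
  have hx : min (f x) c = f x := by rw [hfx, min_self]
  rw [← eq_of_mem_subdiff_of_mem_superdiff
      (mem_subdiff_of_le_of_eq (fun y => min_le_left _ _) hx hp) hq,
    eq_of_mem_subdiff_of_mem_superdiff
      (mem_subdiff_of_le_of_eq (fun y => min_le_right _ _) (hx.trans hfx) hp)
      (zero_mem_superdiff_const c x)]

lemma exists_mem_Icc_smul_eq_of_mem_superdiff_min_const {f : ℝ × ℝ → ℝ} {x p q : ℝ × ℝ}
    {c : ℝ} (hq : q ∈ subdiff f x) (hq₀ : q ≠ 0) (hfx : f x = c)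
    (hp : p ∈ superdiff (fun y => min (f y) c) x) : ∃ μ ∈ Icc (0 : ℝ) 1, p = μ • q :=
  exists_mem_Icc_smul_eq_of_forall_min_dot_le hq₀ fun v =>
    ((diniLowerBound_of_mem_subdiff hq v).min_const hfx).le_dot_of_mem_superdiff hp

lemma ContinuousLinearMap.apply_eq_dot (f' : ℝ × ℝ →L[ℝ] ℝ) (v : ℝ × ℝ) :
    f' v = dot (f' (1, 0), f' (0, 1)) v := by
  rw [dot, mul_comm _ v.1, mul_comm _ v.2, ← smul_eq_mul, ← smul_eq_mul, ← map_smul, ← map_smul,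
    ← map_add]
  congr 1; ext <;> simp

lemma HasFDerivAt.eventually_abs_sub_dot_le {f : ℝ × ℝ → ℝ} {f' : ℝ × ℝ →L[ℝ] ℝ} {x : ℝ × ℝ}
    (hf : HasFDerivAt f f' x) {ε : ℝ} (hε : 0 < ε) :
    ∀ᶠ y in 𝓝 x, |f y - f x - dot (f' (1, 0), f' (0, 1)) (y - x)| ≤ ε * ‖y - x‖ := by
  filter_upwards [Asymptotics.isLittleO_iff.mp hf.isLittleO hε] with y hy
  rwa [f'.apply_eq_dot, Real.norm_eq_abs] at hy

lemma HasFDerivAt.mem_superdiff {f : ℝ × ℝ → ℝ} {f' : ℝ × ℝ →L[ℝ] ℝ} {x : ℝ × ℝ}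
    (hf : HasFDerivAt f f' x) : (f' (1, 0), f' (0, 1)) ∈ superdiff f x := fun _ hε =>
  (hf.eventually_abs_sub_dot_le hε).mono fun _ hy => (abs_le.mp hy).2

lemma HasFDerivAt.mem_subdiff {f : ℝ × ℝ → ℝ} {f' : ℝ × ℝ →L[ℝ] ℝ} {x : ℝ × ℝ}
    (hf : HasFDerivAt f f' x) : (f' (1, 0), f' (0, 1)) ∈ subdiff f x := fun _ hε =>
  (hf.eventually_abs_sub_dot_le hε).mono fun _ hy => by
    have := (abs_le.mp hy).1
    simp only [dot, Prod.fst_sub, Prod.snd_sub, neg_mul] at this ⊢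
    exact this

lemma HasDerivAt.mem_superdiff_inter_subdiff_mul_snd {g : ℝ → ℝ} {g' t : ℝ}
    (hg : HasDerivAt g g' t) (ρ : ℝ) :
    (g' * ρ, g t) ∈
      superdiff (fun y => g y.1 * y.2) (t, ρ) ∩ subdiff (fun y => g y.1 * y.2) (t, ρ) := by
  have hf : HasFDerivAt (fun y : ℝ × ℝ => g y.1 * y.2)
      (g t • ContinuousLinearMap.snd ℝ ℝ ℝ + ρ • g' • ContinuousLinearMap.fst ℝ ℝ ℝ) (t, ρ) :=
    (hg.comp_hasFDerivAt (t, ρ) hasFDerivAt_fst).mul hasFDerivAt_snd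
  convert And.intro hf.mem_superdiff hf.mem_subdiff using 3
  simp [mul_comm]

lemma HasDerivAt.min_const_of_lt {f : ℝ → ℝ} {f' x c : ℝ} (hf : HasDerivAt f f' x)
    (hx : f x < c) : HasDerivAt (fun y => min (f y) c) f' x :=
  hf.congr_of_eventuallyEq <|
    (hf.continuousAt.eventually (gt_mem_nhds hx)).mono fun _ hy => min_eq_left hy.le

lemma ContinuousAt.hasDerivAt_min_const_of_gt {f : ℝ → ℝ} {x c : ℝ} (hf : ContinuousAt f x)
    (hx : c < f x) : HasDerivAt (fun y => min (f y) c) 0 x :=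
  (hasDerivAt_const x c).congr_of_eventuallyEq <|
    (hf.eventually (lt_mem_nhds hx)).mono fun _ hy => min_eq_right hy.le

noncomputable def vortexProfile (α c₀ t : ℝ) : ℝ := (c₀ ^ (-α) + α * t) ^ (-1 / α)

lemma vortexProfile_base_pos {α c₀ t : ℝ} (hc₀ : 0 < c₀) (hα : 0 ≤ α) (ht : 0 ≤ t) :
    0 < c₀ ^ (-α) + α * t :=
  add_pos_of_pos_of_nonneg (rpow_pos_of_pos hc₀ _) (mul_nonneg hα ht)

lemma hasDerivAt_vortexProfile {α c₀ t : ℝ} (hα : α ≠ 0) (hu : 0 < c₀ ^ (-α) + α * t) :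
    HasDerivAt (vortexProfile α c₀) (-vortexProfile α c₀ t ^ (α + 1)) t := by
  have hlin : HasDerivAt (fun t => c₀ ^ (-α) + α * t) α t := by
    simpa using (hasDerivAt_const_mul α).const_add (c₀ ^ (-α))
  refine ((hasDerivAt_rpow_const (Or.inl hu.ne')).comp t hlin).congr_deriv ?_
  rw [vortexProfile, ← rpow_mul hu.le, show -1 / α * (α + 1) = -1 / α - 1 by field_simp; ring]
  field_simp

lemma neg_rpow_add_one_mul_add_max_rpow_mul_eq_zero {α g ρ : ℝ} (hg : 0 < g) :
    -g ^ (α + 1) * ρ + max g 0 ^ α * (g * ρ) = 0 := by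
  rw [max_eq_left hg.le, rpow_add_one hg.ne']
  ring

lemma mul_neg_rpow_add_one_mul_add_max_rpow_mul_nonpos {α g μ ρ : ℝ} (hα : 1 ≤ α) (hg : 0 < g)
    (hρ : 0 ≤ ρ) (hμ : μ ∈ Icc (0 : ℝ) 1) : μ * (-g ^ (α + 1) * ρ) + max (μ * g) 0 ^ α * (g * ρ) ≤ 0 := by
  have hμα : μ ^ α ≤ μ := by
    simpa using rpow_le_rpow_of_exponent_ge' hμ.1 hμ.2 zero_le_one hα
  rw [max_eq_left (mul_nonneg hμ.1 hg.le), mul_rpow hμ.1 hg.le, rpow_add_one hg.ne']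
  have : 0 ≤ g ^ α * g * ρ := by positivity
  nlinarith

theorem vortex_mass_is_viscosity_solution_general (α c₀ L : ℝ) (hα : 1 < α)
    (hc₀ : 0 < c₀) (m : ℝ × ℝ → ℝ)
    (hm : ∀ p : ℝ × ℝ, m p = min ((c₀ ^ (-α) + α * p.1) ^ (-1 / α) * p.2) (c₀ * L)) :
    (∀ t₀ ρ₀ : ℝ, 0 < t₀ → 0 < ρ₀ →
      (c₀ ^ (-α) + α * t₀) ^ (-1 / α) * ρ₀ ≠ c₀ * L →
      ∃ mt mρ : ℝ,
        HasDerivAt (fun t => m (t, ρ₀)) mt t₀ ∧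
        HasDerivAt (fun ρ => m (t₀, ρ)) mρ ρ₀ ∧
        mt + max mρ 0 ^ α * m (t₀, ρ₀) = 0) ∧
    (∀ t₀ ρ₀ : ℝ, 0 < t₀ → 0 < ρ₀ →
      (c₀ ^ (-α) + α * t₀) ^ (-1 / α) * ρ₀ = c₀ * L →
      subdiff m (t₀, ρ₀) = ∅ ∧
      ∀ p : ℝ × ℝ, p ∈ superdiff m (t₀, ρ₀) →
        p.1 + max p.2 0 ^ α * m (t₀, ρ₀) ≤ 0) := by
  obtain rfl : m = fun y => min (vortexProfile α c₀ y.1 * y.2) (c₀ * L) := funext hm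
  set g := vortexProfile α c₀
  have hg : ∀ t, 0 < t → HasDerivAt g (-g t ^ (α + 1)) t ∧ 0 < g t := fun t ht =>
    have hu := vortexProfile_base_pos hc₀ (by linarith) ht.le
    ⟨hasDerivAt_vortexProfile (by linarith) hu, rpow_pos_of_pos hu _⟩
  refine ⟨fun t₀ ρ₀ ht₀ _ hne => ?_, fun t₀ ρ₀ ht₀ hρ₀ heq => ?_⟩
  · obtain ⟨hgt₀, hg₀⟩ := hg t₀ ht₀
    rcases (show g t₀ * ρ₀ ≠ c₀ * L from hne).lt_or_gt with hlt | hgt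
    · refine ⟨_, _, (hgt₀.mul_const ρ₀).min_const_of_lt hlt,
        (hasDerivAt_const_mul (g t₀)).min_const_of_lt hlt, ?_⟩
      simpa [min_eq_left hlt.le] using neg_rpow_add_one_mul_add_max_rpow_mul_eq_zero (ρ := ρ₀) hg₀
    · refine ⟨_, _, (hgt₀.mul_const ρ₀).continuousAt.hasDerivAt_min_const_of_gt hgt,
        (continuous_const_mul (g t₀)).continuousAt.hasDerivAt_min_const_of_gt hgt, ?_⟩
      simp [zero_rpow (by linarith : α ≠ 0)]
  · obtain ⟨hgt₀, hg₀⟩ := hg t₀ ht₀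
    have hq := hgt₀.mem_superdiff_inter_subdiff_mul_snd ρ₀
    have hq₀ : (-g t₀ ^ (α + 1) * ρ₀, g t₀) ≠ 0 := fun h => hg₀.ne' (congrArg Prod.snd h)
    refine ⟨subdiff_min_const_eq_empty hq.1 hq₀ heq, fun p hp => ?_⟩
    obtain ⟨μ, hμ, rfl⟩ := exists_mem_Icc_smul_eq_of_mem_superdiff_min_const hq.2 hq₀ heq hp
    have hmin : min (g t₀ * ρ₀) (c₀ * L) = g t₀ * ρ₀ := min_eq_left heq.le
    simpa [hmin] using mul_neg_rpow_add_one_mul_add_max_rpow_mul_nonpos (le_of_lt hα) hg₀ hρ₀.le hμ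

theorem vortex_mass_is_viscosity_solution (α c₀ L : ℝ) (hα : 1 < α)
    (hc₀ : 0 < c₀) (hL : 0 < L) (m : ℝ × ℝ → ℝ)
    (hm : ∀ p : ℝ × ℝ, m p = min ((c₀ ^ (-α) + α * p.1) ^ (-1 / α) * p.2) (c₀ * L)) :
    (∀ t₀ ρ₀ : ℝ, 0 < t₀ → 0 < ρ₀ →
      (c₀ ^ (-α) + α * t₀) ^ (-1 / α) * ρ₀ ≠ c₀ * L →
      ∃ mt mρ : ℝ,
        HasDerivAt (fun t => m (t, ρ₀)) mt t₀ ∧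
        HasDerivAt (fun ρ => m (t₀, ρ)) mρ ρ₀ ∧
        mt + max mρ 0 ^ α * m (t₀, ρ₀) = 0) ∧
    (∀ t₀ ρ₀ : ℝ, 0 < t₀ → 0 < ρ₀ →
      (c₀ ^ (-α) + α * t₀) ^ (-1 / α) * ρ₀ = c₀ * L →
      subdiff m (t₀, ρ₀) = ∅ ∧
      ∀ p : ℝ × ℝ, p ∈ superdiff m (t₀, ρ₀) →
        p.1 + max p.2 0 ^ α * m (t₀, ρ₀) ≤ 0) :=
  vortex_mass_is_viscosity_solution_general α c₀ L hα hc₀ m hm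
end

section
/- Let α ≥ 1, h_t, h_ρ > 0, and H : ℝ → [0,∞) non-decreasing and differentiable with 0 ≤ H' ≤ Λ. Define G(p,q) = p / (1 + h_t H((p-q)/h_ρ)) for p ∈ [0,M], q ∈ ℝ. Then ∂G/∂q ≥ 0 always, and if (h_t/h_ρ) Λ M ≤ 1/2 then ∂G/∂p ≥ 0; moreover G(p,q) ≤ p. -/
open Real Set

theorem scheme_monotonicity (α ht hρ Λ M : ℝ) (hα : 1 ≤ α)
    (hht : 0 < ht) (hhρ : 0 < hρ) (hΛ : 0 ≤ Λ) (hM : 0 < M)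
    (H : ℝ → ℝ) (hHnn : ∀ s, 0 ≤ H s) (hHmono : Monotone H)
    (hHdiff : Differentiable ℝ H)
    (hH' : ∀ s, 0 ≤ deriv H s ∧ deriv H s ≤ Λ)
    (G : ℝ → ℝ → ℝ)
    (hG : ∀ p q : ℝ, G p q = p / (1 + ht * H ((p - q) / hρ))) :
    ∀ p q : ℝ, p ∈ Icc 0 M →
      (∃ dq : ℝ, HasDerivAt (fun q' => G p q') dq q ∧ 0 ≤ dq) ∧
      (ht / hρ * Λ * M ≤ 1 / 2 →
        ∃ dp : ℝ, HasDerivAt (fun p' => G p' q) dp p ∧ 0 ≤ dp) ∧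
      G p q ≤ p := by
  intro p q hp
  obtain ⟨hp0, hpM⟩ := hp
  set s : ℝ := (p - q) / hρ with hs
  set D : ℝ := 1 + ht * H s with hD
  have hD1 : (1:ℝ) ≤ D := by
    have := hHnn s
    nlinarith
  have hDpos : 0 < D := lt_of_lt_of_le one_pos hD1
  have hDne : D ≠ 0 := ne_of_gt hDpos
  set d : ℝ := deriv H s with hd
  obtain ⟨hd0, hdΛ⟩ := hH' s
  refine ⟨?_, ?_, ?_⟩
  · -- derivative in q
    have h1 : HasDerivAt (fun q' : ℝ => (p - q') / hρ) (-1 / hρ) q :=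
      ((hasDerivAt_id q).const_sub p).div_const hρ
    have h2 : HasDerivAt (fun q' : ℝ => H ((p - q') / hρ)) (d * (-1 / hρ)) q :=
      ((hHdiff s).hasDerivAt).comp q h1
    have h3 : HasDerivAt (fun q' : ℝ => 1 + ht * H ((p - q') / hρ))
        (ht * (d * (-1 / hρ))) q := (h2.const_mul ht).const_add 1
    have h4 : HasDerivAt (fun q' : ℝ => p / (1 + ht * H ((p - q') / hρ)))
        ((0 * D - p * (ht * (d * (-1 / hρ)))) / D ^ 2) q :=
      (hasDerivAt_const q p).div h3 hDne
    refine ⟨(0 * D - p * (ht * (d * (-1 / hρ)))) / D ^ 2, ?_, ?_⟩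
    · have : (fun q' : ℝ => G p q') = fun q' : ℝ => p / (1 + ht * H ((p - q') / hρ)) := by
        funext q'; exact hG p q'
      rw [this]; exact h4
    · apply div_nonneg _ (sq_nonneg D)
      have : 0 * D - p * (ht * (d * (-1 / hρ))) = p * ht * d / hρ := by
        field_simp; ring
      rw [this]
      positivity
  · -- derivative in p
    intro hCFL
    have h1 : HasDerivAt (fun p' : ℝ => (p' - q) / hρ) (1 / hρ) p :=
      ((hasDerivAt_id p).sub_const q).div_const hρ
    have h2 : HasDerivAt (fun p' : ℝ => H ((p' - q) / hρ)) (d * (1 / hρ)) p :=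
      ((hHdiff s).hasDerivAt).comp p h1
    have h3 : HasDerivAt (fun p' : ℝ => 1 + ht * H ((p' - q) / hρ))
        (ht * (d * (1 / hρ))) p := (h2.const_mul ht).const_add 1
    have h4 : HasDerivAt (fun p' : ℝ => p' / (1 + ht * H ((p' - q) / hρ)))
        ((1 * D - p * (ht * (d * (1 / hρ)))) / D ^ 2) p :=
      (hasDerivAt_id p).div h3 hDne
    refine ⟨(1 * D - p * (ht * (d * (1 / hρ)))) / D ^ 2, ?_, ?_⟩
    · have : (fun p' : ℝ => G p' q) = fun p' : ℝ => p' / (1 + ht * H ((p' - q) / hρ)) := by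
        funext p'; exact hG p' q
      rw [this]; exact h4
    · apply div_nonneg _ (sq_nonneg D)
      have key : p * (ht * (d * (1 / hρ))) ≤ 1 / 2 := by
        have h5 : p * (ht * (d * (1 / hρ))) ≤ M * (ht * (Λ * (1 / hρ))) := by
          have hh : 0 < 1 / hρ := by positivity
          have : p * d ≤ M * Λ := mul_le_mul hpM hdΛ hd0 (le_of_lt hM)
          nlinarith [mul_le_mul_of_nonneg_right this (mul_pos hht hh).le]
        calc p * (ht * (d * (1 / hρ))) ≤ M * (ht * (Λ * (1 / hρ))) := h5
          _ = ht / hρ * Λ * M := by ring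
          _ ≤ 1 / 2 := hCFL
      nlinarith
  · rw [hG]
    exact div_le_self hp0 hD1
end
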